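/- In the del Pezzo lattice of rank 9 (δ = 8), the action of the Weyl group W₈ on ordered pairs (Q₁, Q₂) of conic classes with Q₁·Q₂ = 4 has exactly two orbits. Two such pairs lie in the same orbit if and only if they agree on the condition '(Q₁+Q₂)·L > 0 for every (−1)-class L'. Representatives of the two orbits are the pair ((1;1,0,0,0,0,0,0,0), (4;0,2,2,2,1,1,1,1)), whose sum pairs positively with every (−1)-class, and the pair ((1;1,0,0,0,0,0,0,0), (5;1,2,2,2,2,2,2,0)), whose sum pairs to 0 with the (−1)-class (0;0,0,0,0,0,0,0,−1). -/

import Mathlib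

/-- A class in the del Pezzo lattice of rank `1 + δ`: the pair `(a, b)`
represents `a·ℓ − b₁e₁ − ⋯ − b_δ e_δ`. -/
abbrev Cls (δ : ℕ) : Type := ℤ × (Fin δ → ℤ)

/-- The intersection product: `(a;b)·(a';b') = a a' − Σ bᵢ bᵢ'`. -/
def ip {δ : ℕ} (x y : Cls δ) : ℤ := x.1 * y.1 - ∑ i, x.2 i * y.2 i

/-- The canonical class `K = −3ℓ + e₁ + ⋯ + e_δ`, i.e. `(−3; −1, …, −1)`. -/
def Kcls (δ : ℕ) : Cls δ := (-3, fun _ => -1)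

/-- A conic class: `Q·Q = 0` and `K·Q = −2`. -/
def IsConic {δ : ℕ} (Q : Cls δ) : Prop := ip Q Q = 0 ∧ ip (Kcls δ) Q = -2

/-- A `(−1)`-class: `L·L = −1` and `K·L = −1`. -/
def IsMinusOne {δ : ℕ} (L : Cls δ) : Prop := ip L L = -1 ∧ ip (Kcls δ) L = -1

/-- Membership in the Weyl group `W_δ`: a ℤ-linear automorphism of the lattice
preserving the intersection form and fixing the canonical class. -/
def IsWeyl {δ : ℕ} (g : Cls δ ≃ₗ[ℤ] Cls δ) : Prop :=
  (∀ x y : Cls δ, ip (g x) (g y) = ip x y) ∧ g (Kcls δ) = Kcls δ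

/-- Ordered pairs of conic classes in the rank-9 del Pezzo lattice with
intersection product 4. -/
def Pair4 : Type :=
  {p : Cls 8 × Cls 8 // IsConic p.1 ∧ IsConic p.2 ∧ ip p.1 p.2 = 4}

/-- Two pairs are related if a Weyl-group element carries one to the other. -/
def pair4Rel (p q : Pair4) : Prop :=
  ∃ g : Cls 8 ≃ₗ[ℤ] Cls 8, IsWeyl g ∧ g p.1.1 = q.1.1 ∧ g p.1.2 = q.1.2

/-- The sum of a pair of classes is "ample": it pairs positively with every
(−1)-class. -/
def SumAmple (p : Cls 8 × Cls 8) : Prop :=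
  ∀ L : Cls 8, IsMinusOne L → 0 < ip (p.1 + p.2) L

def Q₀ : Cls 8 := (1, ![1,0,0,0,0,0,0,0])
def QA : Cls 8 := (4, ![0,2,2,2,1,1,1,1])
def QB : Cls 8 := (5, ![1,2,2,2,2,2,2,0])
def E₈ : Cls 8 := (0, ![0,0,0,0,0,0,0,-1])

/-! Every conic class is moved to `ℓ - e₁` by the Weyl group: after sorting the multiplicities,
Noether's inequality says that a conic of degree at least two pairs negatively with the root
`ℓ - e₁ - e₂ - e₃`, so the Cremona reflection in that root lowers its degree. With `Q₁ = ℓ - e₁`,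
the same descent inside the stabiliser of `ℓ - e₁` (permutations of `e₂, …, e₈` and the Cremona
reflection) brings `Q₂` to `QA` or `QB`, a finite check once `b₂ + b₃ ≤ 4`. The two are separated
by the Weyl-invariant ampleness of `Q₁ + Q₂`: `Q₀ + QA = -K + (2ℓ - e₂ - e₃ - e₄)`, and the second
summand is nef on `(-1)`-classes.

Indices of `Fin 8` are shifted by one: coordinate `i` is the multiplicity at `e_{i+1}`. -/

theorem Submonoid.exists_smul_mem_of_descent {G X : Type*} [Monoid G] [MulAction G X]
    (H : Submonoid G) {S T : Set X} (f : X → ℕ) (hS : ∀ g ∈ H, ∀ x ∈ S, g • x ∈ S)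
    (step : ∀ x ∈ S, ∃ g ∈ H, g • x ∈ T ∨ f (g • x) < f x) :
    ∀ x ∈ S, ∃ g ∈ H, g • x ∈ T := by
  intro x hx
  induction hn : f x using Nat.strong_induction_on generalizing x with
  | _ n ih =>
    obtain ⟨g, hg, hT | hlt⟩ := step x hx
    · exact ⟨g, hg, hT⟩
    · obtain ⟨h, hh, hT⟩ := ih _ (hn ▸ hlt) (g • x) (hS g hg x hx) rfl
      exact ⟨h * g, H.mul_mem hh hg, by rwa [mul_smul]⟩

lemma exists_perm_antitone {n : ℕ} {α : Type*} [LinearOrder α] (b : Fin n → α) :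
    ∃ σ : Equiv.Perm (Fin n), Antitone (b ∘ σ) :=
  ⟨Fin.revPerm.trans (Tuple.sort b), (Tuple.monotone_sort b).comp_antitone Fin.rev_anti⟩

lemma exists_perm_fix_zero_antitone_tail {n : ℕ} {α : Type*} [LinearOrder α]
    (b : Fin (n + 1) → α) :
    ∃ σ : Equiv.Perm (Fin (n + 1)), σ 0 = 0 ∧ Antitone (Fin.tail (b ∘ σ)) := by
  obtain ⟨τ, hτ⟩ := exists_perm_antitone (Fin.tail b)
  refine ⟨Equiv.Perm.decomposeFin.symm (0, τ), Equiv.Perm.decomposeFin_symm_apply_zero _ _, ?_⟩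
  convert hτ using 1
  ext i
  simp [Fin.tail, Equiv.Perm.decomposeFin_symm_apply_succ]

section

variable {δ : ℕ}

lemma ip_comm (x y : Cls δ) : ip x y = ip y x := by
  simp only [ip, mul_comm]

lemma ip_add_left (x y z : Cls δ) : ip (x + y) z = ip x z + ip y z := by
  simp only [ip, Prod.fst_add, Prod.snd_add, Pi.add_apply, add_mul, Finset.sum_add_distrib]
  ring

lemma ip_add_right (x y z : Cls δ) : ip x (y + z) = ip x y + ip x z := by
  rw [ip_comm, ip_add_left, ip_comm y, ip_comm z]

lemma ip_smul_left (c : ℤ) (x y : Cls δ) : ip (c • x) y = c * ip x y := by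
  simp only [ip, Prod.smul_fst, Prod.smul_snd, Pi.smul_apply, smul_eq_mul, mul_assoc,
    ← Finset.mul_sum]
  ring

lemma ip_smul_right (c : ℤ) (x y : Cls δ) : ip x (c • y) = c * ip x y := by
  rw [ip_comm, ip_smul_left, ip_comm]

lemma ip_self (x : Cls δ) : ip x x = x.1 ^ 2 - ∑ i, x.2 i ^ 2 := by
  simp only [ip, sq]

lemma ip_Kcls_left (x : Cls δ) : ip (Kcls δ) x = -3 * x.1 + ∑ i, x.2 i := by
  simp [ip, Kcls]

def ipForm : LinearMap.BilinForm ℤ (Cls δ) :=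
  LinearMap.mk₂ ℤ ip ip_add_left ip_smul_left ip_add_right ip_smul_right

lemma ipForm_apply (x y : Cls δ) : ipForm x y = ip x y := rfl

def weylGroup (δ : ℕ) : Subgroup (Cls δ ≃ₗ[ℤ] Cls δ) where
  carrier := {g | IsWeyl g}
  mul_mem' {g h} hg hh := ⟨fun x y => by simp only [LinearEquiv.mul_apply, hg.1, hh.1],
    by rw [LinearEquiv.mul_apply, hh.2, hg.2]⟩
  one_mem' := ⟨fun _ _ => rfl, rfl⟩
  inv_mem' {g} hg := by
    refine ⟨fun x y => ?_, ?_⟩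
    · rw [← hg.1, LinearEquiv.coe_inv, g.apply_symm_apply, g.apply_symm_apply]
    · rw [LinearEquiv.coe_inv, g.symm_apply_eq, hg.2]

lemma IsConic.map_weyl {g : Cls δ ≃ₗ[ℤ] Cls δ} (hg : g ∈ weylGroup δ) {Q : Cls δ}
    (hQ : IsConic Q) : IsConic (g Q) := by
  rw [IsConic, hg.1, ← hg.2, hg.1]
  exact hQ

lemma IsMinusOne.map_weyl {g : Cls δ ≃ₗ[ℤ] Cls δ} (hg : g ∈ weylGroup δ) {L : Cls δ}
    (hL : IsMinusOne L) : IsMinusOne (g L) := by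
  rw [IsMinusOne, hg.1, ← hg.2, hg.1]
  exact hL

def rootReflection (r : Cls δ) (hr : ip r r = -2) : Cls δ ≃ₗ[ℤ] Cls δ :=
  Module.reflection (x := r) (f := -ipForm r) (by simp [ipForm_apply, hr])

lemma rootReflection_apply (r : Cls δ) (hr : ip r r = -2) (x : Cls δ) :
    rootReflection r hr x = x + ip r x • r := by
  simp [rootReflection, Module.reflection_apply, ipForm_apply, sub_eq_add_neg]

lemma rootReflection_mem_weylGroup (r : Cls δ) (hr : ip r r = -2) (hK : ip (Kcls δ) r = 0) :
    rootReflection r hr ∈ weylGroup δ := by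
  refine ⟨fun x y => ?_, ?_⟩
  · simp only [rootReflection_apply, ip_add_left, ip_add_right, ip_smul_left, ip_smul_right, hr]
    rw [ip_comm x r]
    ring
  · rw [rootReflection_apply, ip_comm, hK, zero_smul, add_zero]

def permEquiv (σ : Equiv.Perm (Fin δ)) : Cls δ ≃ₗ[ℤ] Cls δ :=
  (LinearEquiv.refl ℤ ℤ).prodCongr (LinearEquiv.funCongrLeft ℤ ℤ σ)

lemma permEquiv_apply (σ : Equiv.Perm (Fin δ)) (x : Cls δ) :
    permEquiv σ x = (x.1, x.2 ∘ σ) := rfl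

lemma permEquiv_mem_weylGroup (σ : Equiv.Perm (Fin δ)) : permEquiv σ ∈ weylGroup δ := by
  refine ⟨fun x y => ?_, rfl⟩
  simp only [permEquiv_apply, ip, Function.comp_apply]
  rw [Equiv.sum_comp σ (fun i => x.2 i * y.2 i)]

lemma IsConic.sum_snd {Q : Cls δ} (hQ : IsConic Q) : ∑ i, Q.2 i = 3 * Q.1 - 2 := by
  have := hQ.2
  rw [ip_Kcls_left] at this
  linarith

lemma IsConic.sum_snd_sq {Q : Cls δ} (hQ : IsConic Q) : ∑ i, Q.2 i ^ 2 = Q.1 ^ 2 := by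
  have := hQ.1
  rw [ip_self] at this
  linarith

lemma IsMinusOne.sum_snd {L : Cls δ} (hL : IsMinusOne L) : ∑ i, L.2 i = 3 * L.1 - 1 := by
  have := hL.2
  rw [ip_Kcls_left] at this
  linarith

lemma IsMinusOne.sum_snd_sq {L : Cls δ} (hL : IsMinusOne L) :
    ∑ i, L.2 i ^ 2 = L.1 ^ 2 + 1 := by
  have := hL.1
  rw [ip_self] at this
  linarith

/-- Cauchy–Schwarz on the other `δ - 1 ≤ 7` multiplicities rules out a negative one. -/
lemma IsConic.snd_nonneg (hδ : δ ≤ 8) {Q : Cls δ} (hQ : IsConic Q) (i : Fin δ) :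
    0 ≤ Q.2 i := by
  have hsum := Finset.add_sum_erase Finset.univ Q.2 (Finset.mem_univ i)
  have hsq := Finset.add_sum_erase Finset.univ (fun j => Q.2 j ^ 2) (Finset.mem_univ i)
  have hcs := sq_sum_le_card_mul_sum_sq (s := Finset.univ.erase i) (f := Q.2)
  rw [Finset.card_erase_of_mem (Finset.mem_univ i), Finset.card_univ, Fintype.card_fin] at hcs
  have hcard : ((δ - 1 : ℕ) : ℤ) ≤ 7 := by omega
  have hrest : 0 ≤ ∑ j ∈ Finset.univ.erase i, Q.2 j ^ 2 :=
    Finset.sum_nonneg fun j _ => sq_nonneg _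
  rw [hQ.sum_snd] at hsum
  rw [hQ.sum_snd_sq] at hsq
  set S := ∑ j ∈ Finset.univ.erase i, Q.2 j
  set R := ∑ j ∈ Finset.univ.erase i, Q.2 j ^ 2
  have h7 : S ^ 2 ≤ 7 * R := hcs.trans (mul_le_mul_of_nonneg_right hcard hrest)
  rw [show S = 3 * Q.1 - 2 - Q.2 i by linarith, show R = Q.1 ^ 2 - Q.2 i ^ 2 by linarith] at h7
  by_contra hneg
  rw [not_le] at hneg
  nlinarith [sq_nonneg (2 * Q.1 - 3 * Q.2 i - 6), mul_pos_of_neg_of_neg hneg hneg]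

lemma IsConic.one_le_fst (hδ : δ ≤ 8) {Q : Cls δ} (hQ : IsConic Q) : 1 ≤ Q.1 := by
  have := Finset.sum_nonneg fun i (_ : i ∈ Finset.univ) => hQ.snd_nonneg hδ i
  rw [hQ.sum_snd] at this
  omega

end

/-- `ℓ - e₁ - e₂ - e₃`; reflecting in it is the quadratic Cremona transformation. -/
def cremonaRoot : Cls 8 := (1, ![1,1,1,0,0,0,0,0])

lemma ip_cremonaRoot (x : Cls 8) : ip cremonaRoot x = x.1 - x.2 0 - x.2 1 - x.2 2 := by
  simp [ip, cremonaRoot, Fin.sum_univ_eight]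
  ring

def cremona : Cls 8 ≃ₗ[ℤ] Cls 8 := rootReflection cremonaRoot (by decide)

lemma cremona_mem_weylGroup : cremona ∈ weylGroup 8 :=
  rootReflection_mem_weylGroup _ _ (by decide)

lemma cremona_apply_fst (x : Cls 8) : (cremona x).1 = 2 * x.1 - x.2 0 - x.2 1 - x.2 2 := by
  rw [cremona, rootReflection_apply, Prod.fst_add, Prod.smul_fst, ip_cremonaRoot]
  simp only [cremonaRoot, smul_eq_mul]
  ring

lemma cremona_Q₀ : cremona Q₀ = Q₀ := by
  rw [cremona, rootReflection_apply, show ip cremonaRoot Q₀ = 0 by decide, zero_smul, add_zero]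

lemma ip_Q₀ (x : Cls 8) : ip Q₀ x = x.1 - x.2 0 := by
  simp [ip, Q₀, Fin.sum_univ_eight]

/-- Noether's inequality: otherwise `a² = ∑ bᵢ² ≤ b₁² + b₂² + b₃ ∑_{i ≥ 3} bᵢ < a²`. -/
lemma IsConic.fst_lt_of_antitone {Q : Cls 8} (hQ : IsConic Q) (hanti : Antitone Q.2)
    (h2 : 2 ≤ Q.1) : Q.1 < Q.2 0 + Q.2 1 + Q.2 2 := by
  have hs := hQ.sum_snd
  have hq := hQ.sum_snd_sq
  rw [Fin.sum_univ_eight] at hs hq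
  have hb (i j : Fin 8) (hij : i ≤ j) : Q.2 j ≤ Q.2 i := hanti hij
  have key (i : Fin 8) (hi : 2 ≤ i) : Q.2 i ^ 2 ≤ Q.2 2 * Q.2 i := by
    rw [sq]; exact mul_le_mul_of_nonneg_right (hanti hi) (hQ.snd_nonneg le_rfl i)
  have hsq : Q.1 ^ 2 ≤ Q.2 0 ^ 2 + Q.2 1 ^ 2 + Q.2 2 ^ 2 +
      Q.2 2 * (Q.2 3 + Q.2 4 + Q.2 5 + Q.2 6 + Q.2 7) := by
    nlinarith [key 3 (by decide), key 4 (by decide), key 5 (by decide), key 6 (by decide),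
      key 7 (by decide)]
  by_contra! h
  have h02 := hb 0 2 (by decide)
  have h12 := hb 1 2 (by decide)
  have h2nn := hQ.snd_nonneg le_rfl 2
  have htail : Q.2 3 + Q.2 4 + Q.2 5 + Q.2 6 + Q.2 7 ≤ 5 * Q.2 2 := by
    linarith [hb 2 3 (by decide), hb 2 4 (by decide), hb 2 5 (by decide), hb 2 6 (by decide),
      hb 2 7 (by decide)]
  nlinarith [mul_nonneg (sub_nonneg.2 h02) (sub_nonneg.2 h12),
    mul_nonneg h2nn (sub_nonneg.2 (add_le_add h02 h12)),
    mul_nonneg h2nn (by linarith : 0 ≤ Q.1 - 3 * Q.2 2),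
    mul_nonneg (by linarith : 0 ≤ Q.1 - Q.2 0 - Q.2 1 - Q.2 2)
      (by linarith : 0 ≤ Q.1 - 3 * Q.2 2 + Q.2 0 + Q.2 1)]

lemma IsConic.eq_Q₀_of_antitone {Q : Cls 8} (hQ : IsConic Q) (hanti : Antitone Q.2)
    (h1 : Q.1 ≤ 1) : Q = Q₀ := by
  have ha := hQ.one_le_fst le_rfl
  have hs := hQ.sum_snd
  rw [Fin.sum_univ_eight] at hs
  have hchain : Q.2 1 ≤ Q.2 0 ∧ Q.2 2 ≤ Q.2 1 ∧ Q.2 3 ≤ Q.2 2 ∧ Q.2 4 ≤ Q.2 3 ∧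
      Q.2 5 ≤ Q.2 4 ∧ Q.2 6 ≤ Q.2 5 ∧ Q.2 7 ≤ Q.2 6 := by
    refine ⟨hanti ?_, hanti ?_, hanti ?_, hanti ?_, hanti ?_, hanti ?_, hanti ?_⟩ <;> decide
  have h7 := hQ.snd_nonneg le_rfl 7
  refine Prod.ext (by simp only [Q₀]; omega) (funext fun i => ?_)
  fin_cases i <;> simp only [Q₀] <;> simp <;> omega

lemma IsConic.eq_QA_or_QB {Q : Cls 8} (hQ : IsConic Q) (h4 : ip Q₀ Q = 4)
    (hanti : Antitone (Fin.tail Q.2)) (h5 : Q.2 1 + Q.2 2 ≤ 4) : Q = QA ∨ Q = QB := by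
  have hs := hQ.sum_snd
  have hq := hQ.sum_snd_sq
  rw [Fin.sum_univ_eight] at hs hq
  rw [ip_Q₀] at h4
  have hchain : Q.2 2 ≤ Q.2 1 ∧ Q.2 3 ≤ Q.2 2 ∧ Q.2 4 ≤ Q.2 3 ∧
      Q.2 5 ≤ Q.2 4 ∧ Q.2 6 ≤ Q.2 5 ∧ Q.2 7 ≤ Q.2 6 :=
    ⟨hanti (by decide : (0 : Fin 7) ≤ 1), hanti (by decide : (1 : Fin 7) ≤ 2),
      hanti (by decide : (2 : Fin 7) ≤ 3), hanti (by decide : (3 : Fin 7) ≤ 4),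
      hanti (by decide : (4 : Fin 7) ≤ 5), hanti (by decide : (5 : Fin 7) ≤ 6)⟩
  have h7 := hQ.snd_nonneg le_rfl 7
  suffices h : (Q.1 = 4 ∧ Q.2 1 = 2 ∧ Q.2 2 = 2 ∧ Q.2 3 = 2 ∧ Q.2 4 = 1 ∧ Q.2 5 = 1 ∧
      Q.2 6 = 1 ∧ Q.2 7 = 1) ∨ (Q.1 = 5 ∧ Q.2 1 = 2 ∧ Q.2 2 = 2 ∧ Q.2 3 = 2 ∧ Q.2 4 = 2 ∧
      Q.2 5 = 2 ∧ Q.2 6 = 2 ∧ Q.2 7 = 0) by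
    rcases h with h | h <;> [left; right] <;> refine Prod.ext h.1 (funext fun i => ?_) <;>
      fin_cases i <;> simp [QA, QB] <;> omega
  have hq' : Q.2 1 ^ 2 + Q.2 2 ^ 2 + Q.2 3 ^ 2 + Q.2 4 ^ 2 + Q.2 5 ^ 2 + Q.2 6 ^ 2 + Q.2 7 ^ 2
      = 8 * Q.1 - 16 := by
    rw [show Q.2 0 = Q.1 - 4 by omega] at hq
    linarith
  have hs' : Q.2 1 + Q.2 2 + Q.2 3 + Q.2 4 + Q.2 5 + Q.2 6 + Q.2 7 = 2 * Q.1 + 2 := by omega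
  clear hq hs h4
  obtain ⟨c2, c3, c4, c5, c6, c7⟩ := hchain
  have : 0 ≤ Q.2 6 := by omega
  have : 0 ≤ Q.2 5 := by omega
  have : 0 ≤ Q.2 4 := by omega
  have : 0 ≤ Q.2 3 := by omega
  have : 0 ≤ Q.2 2 := by omega
  have : 0 ≤ Q.2 1 := by omega
  have : Q.2 1 ≤ 4 := by omega
  interval_cases Q.2 1 <;> interval_cases Q.2 2 <;> interval_cases Q.2 3 <;>
    interval_cases Q.2 4 <;> interval_cases Q.2 5 <;> interval_cases Q.2 6 <;>
    interval_cases Q.2 7 <;> omega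

lemma Q₀_snd (i : Fin 8) : Q₀.2 i = if i = 0 then 1 else 0 := by
  fin_cases i <;> rfl

lemma permEquiv_Q₀ {σ : Equiv.Perm (Fin 8)} (hσ : σ 0 = 0) : permEquiv σ Q₀ = Q₀ := by
  refine Prod.ext rfl (funext fun i => ?_)
  have : σ i = 0 ↔ i = 0 := by simpa [hσ] using σ.apply_eq_iff_eq (x := i) (y := 0)
  simp only [permEquiv_apply, Function.comp_apply, Q₀_snd, this]

lemma exists_weyl_apply_eq_Q₀ {Q : Cls 8} (hQ : IsConic Q) : ∃ g ∈ weylGroup 8, g Q = Q₀ := by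
  refine (weylGroup 8).toSubmonoid.exists_smul_mem_of_descent (S := {Q | IsConic Q})
    (T := {Q₀}) (fun Q => Q.1.toNat) (fun g hg Q hQ => hQ.map_weyl hg) (fun Q hQ => ?_) Q hQ
  obtain ⟨σ, hσ⟩ := exists_perm_antitone Q.2
  have hQσ : IsConic (permEquiv σ Q) := hQ.map_weyl (permEquiv_mem_weylGroup σ)
  by_cases h1 : Q.1 ≤ 1
  · exact ⟨permEquiv σ, permEquiv_mem_weylGroup σ, Or.inl (hQσ.eq_Q₀_of_antitone hσ h1)⟩
  · refine ⟨cremona * permEquiv σ, mul_mem cremona_mem_weylGroup (permEquiv_mem_weylGroup σ),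
      Or.inr ?_⟩
    have hlt := hQσ.fst_lt_of_antitone hσ (by simp only [permEquiv_apply]; omega)
    have hpos := (hQσ.map_weyl cremona_mem_weylGroup).one_le_fst le_rfl
    rw [LinearEquiv.smul_def, LinearEquiv.mul_apply] at *
    rw [cremona_apply_fst] at hpos ⊢
    simp only [permEquiv_apply, Function.comp_apply] at hlt hpos ⊢
    omega

lemma exists_weyl_fix_Q₀ {Q : Cls 8} (hQ : IsConic Q) (h4 : ip Q₀ Q = 4) :
    ∃ g ∈ weylGroup 8, g Q₀ = Q₀ ∧ (g Q = QA ∨ g Q = QB) := by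
  let H := weylGroup 8 ⊓ MulAction.stabilizer (Cls 8 ≃ₗ[ℤ] Cls 8) Q₀
  suffices ∃ g ∈ H, g Q ∈ ({QA, QB} : Set (Cls 8)) from
    let ⟨g, hg, hgQ⟩ := this; ⟨g, hg.1, hg.2, hgQ⟩
  refine H.toSubmonoid.exists_smul_mem_of_descent (S := {Q | IsConic Q ∧ ip Q₀ Q = 4})
    (fun Q => Q.1.toNat) (fun g hg Q hQ => ?_) (fun Q hQ => ?_) Q ⟨hQ, h4⟩
  · obtain ⟨hgW, hgQ₀ : g Q₀ = Q₀⟩ := hg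
    refine ⟨hQ.1.map_weyl hgW, ?_⟩
    rw [LinearEquiv.smul_def, ← hgQ₀, hgW.1, hQ.2]
  obtain ⟨hQ, h4⟩ := hQ
  obtain ⟨σ, hσ0, hσ⟩ := exists_perm_fix_zero_antitone_tail Q.2
  have hσH : permEquiv σ ∈ H := ⟨permEquiv_mem_weylGroup σ, permEquiv_Q₀ hσ0⟩
  have hQσ : IsConic (permEquiv σ Q) := hQ.map_weyl (permEquiv_mem_weylGroup σ)
  have h4σ : ip Q₀ (permEquiv σ Q) = 4 := by
    rw [← permEquiv_Q₀ hσ0, (permEquiv_mem_weylGroup σ).1, h4]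
  by_cases h5 : (permEquiv σ Q).2 1 + (permEquiv σ Q).2 2 ≤ 4
  · exact ⟨permEquiv σ, hσH, Or.inl (hQσ.eq_QA_or_QB h4σ hσ h5)⟩
  · have hcH : cremona ∈ H := ⟨cremona_mem_weylGroup, cremona_Q₀⟩
    refine ⟨cremona * permEquiv σ, mul_mem hcH hσH, Or.inr ?_⟩
    have hpos := (hQσ.map_weyl cremona_mem_weylGroup).one_le_fst le_rfl
    rw [ip_Q₀] at h4σ
    rw [LinearEquiv.smul_def, LinearEquiv.mul_apply] at *
    rw [cremona_apply_fst] at hpos ⊢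
    simp only [permEquiv_apply, Function.comp_apply] at h4σ h5 hpos ⊢
    omega

lemma isConic_Q₀ : IsConic Q₀ := ⟨by decide, by decide⟩

lemma isConic_QA : IsConic QA := ⟨by decide, by decide⟩

lemma isConic_QB : IsConic QB := ⟨by decide, by decide⟩

lemma isMinusOne_E₈ : IsMinusOne E₈ := ⟨by decide, by decide⟩

lemma exists_weyl_pair {Q₁ Q₂ : Cls 8} (h₁ : IsConic Q₁) (h₂ : IsConic Q₂) (h : ip Q₁ Q₂ = 4) :
    ∃ g ∈ weylGroup 8, g Q₁ = Q₀ ∧ (g Q₂ = QA ∨ g Q₂ = QB) := by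
  obtain ⟨g, hg, hgQ₁⟩ := exists_weyl_apply_eq_Q₀ h₁
  have h' : ip Q₀ (g Q₂) = 4 := by rw [← hgQ₁, hg.1, h]
  obtain ⟨k, hk, hkQ₀, hkQ₂⟩ := exists_weyl_fix_Q₀ (h₂.map_weyl hg) h'
  exact ⟨k * g, mul_mem hk hg, by rw [LinearEquiv.mul_apply, hgQ₁, hkQ₀], hkQ₂⟩

/-- Cauchy–Schwarz on the blocks `{2,3,4}` and `{1,5,6,7,8}`: the class `2ℓ - e₂ - e₃ - e₄`
is nef on `(-1)`-classes. -/
lemma IsMinusOne.sum_three_le {L : Cls 8} (hL : IsMinusOne L) :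
    L.2 1 + L.2 2 + L.2 3 ≤ 2 * L.1 := by
  have hcs := sq_sum_le_card_mul_sum_sq (s := Finset.univ) (f := L.2)
  rw [hL.sum_snd, hL.sum_snd_sq] at hcs
  have hs := hL.sum_snd
  have hq := hL.sum_snd_sq
  rw [Fin.sum_univ_eight] at hs hq
  simp only [Finset.card_univ, Fintype.card_fin, Nat.cast_ofNat] at hcs
  have ha : -1 ≤ L.1 := by nlinarith
  set b := L.2
  have h3 : (b 1 + b 2 + b 3) ^ 2 ≤ 3 * (b 1 ^ 2 + b 2 ^ 2 + b 3 ^ 2) := by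
    nlinarith [sq_nonneg (b 1 - b 2), sq_nonneg (b 1 - b 3), sq_nonneg (b 2 - b 3)]
  have h5 : (b 0 + b 4 + b 5 + b 6 + b 7) ^ 2 ≤
      5 * (b 0 ^ 2 + b 4 ^ 2 + b 5 ^ 2 + b 6 ^ 2 + b 7 ^ 2) := by
    nlinarith [sq_nonneg (b 0 - b 4), sq_nonneg (b 0 - b 5), sq_nonneg (b 0 - b 6),
      sq_nonneg (b 0 - b 7), sq_nonneg (b 4 - b 5), sq_nonneg (b 4 - b 6), sq_nonneg (b 4 - b 7),
      sq_nonneg (b 5 - b 6), sq_nonneg (b 5 - b 7), sq_nonneg (b 6 - b 7)]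
  have hodd : 0 < (2 * L.1 + 1) ^ 2 := by
    have : 2 * L.1 + 1 ≠ 0 := by omega
    positivity
  by_contra! h
  nlinarith [mul_nonneg (by linarith : (0 : ℤ) ≤ b 1 + b 2 + b 3 - 2 * L.1 - 1)
    (by linarith : (0 : ℤ) ≤ L.1 + 1)]

lemma sumAmple_Q₀_QA : SumAmple (Q₀, QA) := by
  intro L hL
  have hs := hL.sum_snd
  rw [Fin.sum_univ_eight] at hs
  have h3 := hL.sum_three_le
  have : ip (Q₀ + QA) L = 5 * L.1 -
      (L.2 0 + 2 * L.2 1 + 2 * L.2 2 + 2 * L.2 3 + L.2 4 + L.2 5 + L.2 6 + L.2 7) := by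
    simp [ip, Q₀, QA, Fin.sum_univ_eight]
  rw [this]
  linarith

lemma not_sumAmple_Q₀_QB : ¬ SumAmple (Q₀, QB) := fun h =>
  (h E₈ isMinusOne_E₈).ne' (by decide)

lemma sumAmple_map_weyl_iff {g : Cls 8 ≃ₗ[ℤ] Cls 8} (hg : g ∈ weylGroup 8) (x y : Cls 8) :
    SumAmple (g x, g y) ↔ SumAmple (x, y) := by
  suffices ∀ g ∈ weylGroup 8, ∀ x y : Cls 8, SumAmple (x, y) → SumAmple (g x, g y) from
    ⟨fun h => by
      simpa only [LinearEquiv.coe_inv, LinearEquiv.symm_apply_apply] using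
        this g⁻¹ (inv_mem hg) _ _ h,
      this g hg x y⟩
  intro g hg x y h L hL
  have := h (g⁻¹ L) (hL.map_weyl (inv_mem hg))
  rwa [← hg.1, map_add, LinearEquiv.coe_inv, g.apply_symm_apply] at this

lemma sumAmple_iff_eq_QA {g : Cls 8 ≃ₗ[ℤ] Cls 8} (hg : g ∈ weylGroup 8) {x y : Cls 8}
    (hx : g x = Q₀) (hy : g y = QA ∨ g y = QB) : SumAmple (x, y) ↔ g y = QA := by
  rw [← sumAmple_map_weyl_iff hg, hx]
  rcases hy with hy | hy <;> rw [hy]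
  · exact iff_of_true sumAmple_Q₀_QA rfl
  · exact iff_of_false not_sumAmple_Q₀_QB (by decide)

lemma pair4Rel_iff (p q : Pair4) : pair4Rel p q ↔ (SumAmple p.1 ↔ SumAmple q.1) := by
  constructor
  · rintro ⟨h, hh, h₁, h₂⟩
    rw [← sumAmple_map_weyl_iff hh, h₁, h₂]
  intro hiff
  obtain ⟨g, hg, hg₁, hg₂⟩ := exists_weyl_pair p.2.1 p.2.2.1 p.2.2.2
  obtain ⟨k, hk, hk₁, hk₂⟩ := exists_weyl_pair q.2.1 q.2.2.1 q.2.2.2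
  rw [sumAmple_iff_eq_QA hg hg₁ hg₂, sumAmple_iff_eq_QA hk hk₁ hk₂] at hiff
  have h₂ : g p.1.2 = k q.1.2 := by
    rcases hg₂ with h | h <;> rcases hk₂ with h' | h' <;> simp_all
  refine ⟨k⁻¹ * g, mul_mem (inv_mem hk) hg, ?_, ?_⟩ <;>
    rw [LinearEquiv.mul_apply, LinearEquiv.coe_inv, LinearEquiv.symm_apply_eq]
  exacts [hg₁.trans hk₁.symm, h₂]

lemma card_quot_pair4Rel : Nat.card (Quot pair4Rel) = 2 := by
  let f : Quot pair4Rel → Prop := Quot.lift (fun p => SumAmple p.1)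
    fun p q h => propext ((pair4Rel_iff p q).1 h)
  have hf : f.Bijective := by
    refine ⟨fun x y hxy => ?_, fun P => ?_⟩
    · induction x using Quot.ind
      induction y using Quot.ind
      exact Quot.sound ((pair4Rel_iff _ _).2 (Iff.of_eq hxy))
    · by_cases hP : P
      · exact ⟨Quot.mk _ ⟨(Q₀, QA), isConic_Q₀, isConic_QA, by decide⟩,
          propext (iff_of_true sumAmple_Q₀_QA hP)⟩
      · exact ⟨Quot.mk _ ⟨(Q₀, QB), isConic_Q₀, isConic_QB, by decide⟩,
          propext (iff_of_false not_sumAmple_Q₀_QB hP)⟩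
  rw [Nat.card_congr (Equiv.ofBijective f hf), Nat.card_eq_fintype_card, Fintype.card_prop]

/-- The Weyl group W₈ acts on ordered pairs of conic classes with intersection
product 4 with exactly two orbits; two pairs lie in the same orbit iff they
agree on the ampleness of their sum; and (Q₀, QA) and (Q₀, QB) are
representatives of the two orbits, the first with ample sum, the second with
sum pairing to 0 with the (−1)-class E₈. -/
theorem stmt7 :
    Nat.card (Quot pair4Rel) = 2 ∧
    (∀ p q : Pair4, pair4Rel p q ↔ (SumAmple p.1 ↔ SumAmple q.1)) ∧
    (IsConic Q₀ ∧ IsConic QA ∧ IsConic QB ∧ ip Q₀ QA = 4 ∧ ip Q₀ QB = 4 ∧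
      SumAmple (Q₀, QA) ∧ IsMinusOne E₈ ∧ ip (Q₀ + QB) E₈ = 0) :=
  ⟨card_quot_pair4Rel, pair4Rel_iff, isConic_Q₀, isConic_QA, isConic_QB, by decide, by decide,
    sumAmple_Q₀_QA, isMinusOne_E₈, by decide⟩
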